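/- Let F preserve colimits of λ-chains on a cocomplete category C. Then F_λ carries a monad structure M(F) = (F_λ, η^F, μ^F) with η^F = ι_λ and μ^F = Z_F ε_λ V_F (where V_F ⊣ Z_F is the free-forgetful adjunction for F-algebras), and this monad together with y_λ : F → F_λ is the free monad on F: for every monad T = (T, η^T, μ^T) on C and every natural transformation ρ : F → T there is a unique monad morphism σ : M(F) → T with σ ∘ y_λ = ρ. -/

import Mathlib

open CategoryTheory CategoryTheory.Limits

universe v u

/-- The free-algebra (term functor) construction for an endofunctor `F` on a cocomplete
category: term functors `Fo n` for each ordinal `n`, connecting natural transformations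
`w`, coproduct injections `q n : F ∘ Fₙ ⟶ F_{n+1}` and `ι n : Id ⟶ Fₙ`, where
`F₀ = Id` (up to iso, witnessed by `ι 0` being invertible), `F_{n+1} = F Fₙ + Id`
(witnessed by the binary-coproduct universal property), and `Fₗ = colim_{m<l} F_m` at
limit ordinals (witnessed by the hand-rolled colimit universal property). -/
structure TermConstruction {C : Type u} [Category.{v} C] (F : C ⥤ C) where
  Fo : Ordinal.{v} → C ⥤ C
  w : ∀ {m n : Ordinal.{v}}, m ≤ n → (Fo m ⟶ Fo n)
  q : ∀ n : Ordinal.{v}, Fo n ⋙ F ⟶ Fo (n + 1)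
  ι : ∀ n : Ordinal.{v}, 𝟭 C ⟶ Fo n
  iso0 : IsIso (ι 0)
  w_refl : ∀ n : Ordinal.{v}, w (le_refl n) = 𝟙 (Fo n)
  w_trans : ∀ {m n p : Ordinal.{v}} (h₁ : m ≤ n) (h₂ : n ≤ p), w h₁ ≫ w h₂ = w (h₁.trans h₂)
  ι_w : ∀ {m n : Ordinal.{v}} (h : m ≤ n), ι m ≫ w h = ι n
  q_w : ∀ {m n : Ordinal.{v}} (h : m ≤ n),
      Functor.whiskerRight (w h) F ≫ q n = q m ≫ w (add_le_add_left h 1)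
  succ_isColimit : ∀ (n : Ordinal.{v}) (A : C),
      Nonempty (IsColimit (BinaryCofan.mk ((q n).app A) ((ι (n + 1)).app A)))
  limit_exists_unique : ∀ (n : Ordinal.{v}), Order.IsSuccLimit n → ∀ (A X : C)
      (g : ∀ m : Ordinal.{v}, m < n → ((Fo m).obj A ⟶ X)),
      (∀ (m m' : Ordinal.{v}) (h : m ≤ m') (h' : m' < n),
        (w h).app A ≫ g m' h' = g m (lt_of_le_of_lt h h')) →
      ∃! k : (Fo n).obj A ⟶ X,
        ∀ (m : Ordinal.{v}) (h : m < n), (w h.le).app A ≫ k = g m h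

/-- The term-evaluations `ε n : Fₙ A ⟶ A` of an `F`-algebra `(A, α)`, defined recursively by
`ε 0 = id` (transported along `ι 0`), `ε (n+1) = [α ∘ F (ε n), id]` and colimits at limit
ordinals. -/
structure TermEval {C : Type u} [Category.{v} C] (F : C ⥤ C) (T : TermConstruction F)
    (A : C) (α : F.obj A ⟶ A) where
  ε : ∀ n : Ordinal.{v}, (T.Fo n).obj A ⟶ A
  ε_zero : (T.ι 0).app A ≫ ε 0 = 𝟙 A
  ε_succ_q : ∀ n : Ordinal.{v}, (T.q n).app A ≫ ε (n + 1) = F.map (ε n) ≫ α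
  ε_succ_ι : ∀ n : Ordinal.{v}, (T.ι (n + 1)).app A ≫ ε (n + 1) = 𝟙 A
  ε_limit : ∀ (n : Ordinal.{v}), Order.IsSuccLimit n →
      ∀ (m : Ordinal.{v}) (h : m < n), (T.w h.le).app A ≫ ε n = ε m

/-!
For every `A`, `(F_l A, υ_A)` is the free `F`-algebra on `A` with unit `ι_l`: term evaluation
`ε_l` extends any `f : A ⟶ B` to the algebra homomorphism `F_l f ≫ ε_l`, because `F` preserves the
colimit `F_l = colim_{m<l} F_m`; and an algebra homomorphism out of `F_l A` is determined by its
restriction along `ι_l`, by transfinite induction along the chain. Since term evaluation is natural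
in algebra homomorphisms, `μ = ε_l` is associative, and the right unit law is an instance of the
uniqueness of extensions. A natural transformation `ρ : F ⟶ M` makes each `M A` an `F`-algebra via
`ρ ≫ μ^M`; the monad morphism `σ` is the free extension of `η^M`, and any `σ'` with `y ≫ σ' = ρ`
that preserves multiplication is an algebra homomorphism, because `υ = y ≫ μ`, hence equals `σ`.
-/

namespace TermConstruction

variable {C : Type u} [Category.{v} C] {F : C ⥤ C} (T : TermConstruction F)

lemma succ_hom_ext {n : Ordinal.{v}} {A X : C} {f g : (T.Fo (n + 1)).obj A ⟶ X}
    (hq : (T.q n).app A ≫ f = (T.q n).app A ≫ g)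
    (hι : (T.ι (n + 1)).app A ≫ f = (T.ι (n + 1)).app A ≫ g) : f = g :=
  BinaryCofan.IsColimit.hom_ext (T.succ_isColimit n A).some hq hι

lemma limit_hom_ext {n : Ordinal.{v}} (hn : Order.IsSuccLimit n) {A X : C}
    {f g : (T.Fo n).obj A ⟶ X}
    (h : ∀ (m : Ordinal.{v}) (hm : m < n), (T.w hm.le).app A ≫ f = (T.w hm.le).app A ≫ g) :
    f = g := by
  obtain ⟨k, -, hk⟩ := T.limit_exists_unique n hn A X (fun m hm => (T.w hm.le).app A ≫ g)
    (fun _ _ _ _ => by rw [← Category.assoc, ← NatTrans.comp_app, T.w_trans])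
  rw [hk f h, hk g fun _ _ => rfl]

lemma w_app_comp_w_app {m n p : Ordinal.{v}} (h₁ : m ≤ n) (h₂ : n ≤ p) (A : C) :
    (T.w h₁).app A ≫ (T.w h₂).app A = (T.w (h₁.trans h₂)).app A := by
  rw [← NatTrans.comp_app, T.w_trans]

lemma ι_app_comp_w_app {m n : Ordinal.{v}} (h : m ≤ n) (A : C) :
    (T.ι m).app A ≫ (T.w h).app A = (T.ι n).app A := by
  rw [← NatTrans.comp_app, T.ι_w]

def chain (l : Ordinal.{v}) (B : C) : {m : Ordinal.{v} // m < l} ⥤ C where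
  obj m := (T.Fo m.1).obj B
  map f := (T.w (leOfHom f)).app B
  map_id m := by rw [T.w_refl]; rfl
  map_comp f g := (T.w_app_comp_w_app _ _ B).symm

def chainCocone (l : Ordinal.{v}) (B : C) : Cocone (T.chain l B) where
  pt := (T.Fo l).obj B
  ι :=
    { app := fun m => (T.w m.2.le).app B
      naturality := fun _ _ f => by
        simp only [chain, Functor.const_obj_obj, Functor.const_obj_map, Category.comp_id]
        exact T.w_app_comp_w_app _ _ B }

noncomputable def chainCoconeIsColimit {l : Ordinal.{v}} (hl : Order.IsSuccLimit l) (B : C) :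
    IsColimit (T.chainCocone l B) :=
  have compat (t : Cocone (T.chain l B)) (m m' : Ordinal.{v}) (h : m ≤ m') (h' : m' < l) :
      (T.w h).app B ≫ t.ι.app ⟨m', h'⟩ = t.ι.app ⟨m, h.trans_lt h'⟩ :=
    t.w (homOfLE (show (⟨m, h.trans_lt h'⟩ : {x // x < l}) ≤ ⟨m', h'⟩ from h))
  { desc := fun t => (T.limit_exists_unique l hl B t.pt _ (compat t)).choose
    fac := fun t j => (T.limit_exists_unique l hl B t.pt _ (compat t)).choose_spec.1 j.1 j.2
    uniq := fun t k hk =>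
      (T.limit_exists_unique l hl B t.pt _ (compat t)).choose_spec.2 k fun m hm => hk ⟨m, hm⟩ }

lemma map_limit_hom_ext {l : Ordinal.{v}} (hl : Order.IsSuccLimit l)
    [PreservesColimitsOfShape {m : Ordinal.{v} // m < l} F] {B X : C}
    {f g : F.obj ((T.Fo l).obj B) ⟶ X}
    (h : ∀ (m : Ordinal.{v}) (hm : m < l),
      F.map ((T.w hm.le).app B) ≫ f = F.map ((T.w hm.le).app B) ≫ g) : f = g :=
  (isColimitOfPreserves F (T.chainCoconeIsColimit hl B)).hom_ext fun j => h j.1 j.2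

def IsChainAlgStr (l : Ordinal.{v}) (υ : T.Fo l ⋙ F ⟶ T.Fo l) : Prop :=
  ∀ (n : Ordinal.{v}) (hn : n < l) (hn1 : n + 1 ≤ l) (A : C),
    F.map ((T.w hn.le).app A) ≫ υ.app A = (T.q n).app A ≫ (T.w hn1).app A

/-- Uniqueness half of the freeness of the algebra `(F_l A, υ_A)` on `A`. -/
lemma algHom_ext {l : Ordinal.{v}} (hl : Order.IsSuccLimit l) {υ : T.Fo l ⋙ F ⟶ T.Fo l}
    (hυ : T.IsChainAlgStr l υ) {A X : C} (e : F.obj X ⟶ X) {τ τ' : (T.Fo l).obj A ⟶ X}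
    (hι : (T.ι l).app A ≫ τ = (T.ι l).app A ≫ τ')
    (hτ : υ.app A ≫ τ = F.map τ ≫ e) (hτ' : υ.app A ≫ τ' = F.map τ' ≫ e) : τ = τ' := by
  suffices H : ∀ (m : Ordinal.{v}) (hm : m < l),
      (T.w hm.le).app A ≫ τ = (T.w hm.le).app A ≫ τ' from T.limit_hom_ext hl H
  intro m
  induction m using Ordinal.limitRecOn with
  | zero =>
    intro hm
    have := T.iso0
    rw [← cancel_epi ((T.ι 0).app A), ← Category.assoc, T.ι_app_comp_w_app, ← Category.assoc,
      T.ι_app_comp_w_app]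
    exact hι
  | add_one a ih =>
    intro hm
    have hal : a < l := (Order.lt_add_one_iff.2 le_rfl).trans hm
    apply T.succ_hom_ext
    · rw [← Category.assoc, ← hυ a hal hm.le A, Category.assoc, hτ, ← F.map_comp_assoc,
        ← Category.assoc, ← hυ a hal hm.le A, Category.assoc, hτ', ← F.map_comp_assoc, ih hal]
    · rw [← Category.assoc, T.ι_app_comp_w_app, ← Category.assoc, T.ι_app_comp_w_app]
      exact hι
  | limit n hn ih =>
    intro hm
    refine T.limit_hom_ext hn fun k hk => ?_
    rw [← Category.assoc, T.w_app_comp_w_app, ← Category.assoc, T.w_app_comp_w_app]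
    exact ih k hk (hk.trans hm)

end TermConstruction

namespace TermEval

variable {C : Type u} [Category.{v} C] {F : C ⥤ C} {T : TermConstruction F} {l : Ordinal.{v}}

lemma ι_comp_ε {A : C} {α : F.obj A ⟶ A} (E : TermEval F T A α) (n : Ordinal.{v}) :
    (T.ι n).app A ≫ E.ε n = 𝟙 A := by
  rcases Ordinal.zero_or_succ_or_isSuccLimit n with rfl | ⟨a, rfl⟩ | hn
  · exact E.ε_zero
  · rw [Order.succ_eq_add_one]; exact E.ε_succ_ι a
  · rw [← T.ι_app_comp_w_app hn.pos.le, Category.assoc, E.ε_limit n hn 0 hn.pos, E.ε_zero]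

lemma ι_comp_map_comp_ε {A B : C} {β : F.obj B ⟶ B} (E : TermEval F T B β) (n : Ordinal.{v})
    (f : A ⟶ B) : (T.ι n).app A ≫ (T.Fo n).map f ≫ E.ε n = f := by
  rw [← Category.assoc, ← (T.ι n).naturality f, Functor.id_map, Category.assoc, E.ι_comp_ε]
  exact Category.comp_id f

lemma map_comp_ε {A B : C} {α : F.obj A ⟶ A} {β : F.obj B ⟶ B}
    (EA : TermEval F T A α) (EB : TermEval F T B β) {h : A ⟶ B}
    (hh : α ≫ h = F.map h ≫ β) (n : Ordinal.{v}) :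
    (T.Fo n).map h ≫ EB.ε n = EA.ε n ≫ h := by
  induction n using Ordinal.limitRecOn with
  | zero =>
    have := T.iso0
    rw [← cancel_epi ((T.ι 0).app A), EB.ι_comp_map_comp_ε, ← Category.assoc, EA.ι_comp_ε]
    exact (Category.id_comp h).symm
  | add_one a ih =>
    apply T.succ_hom_ext
    · rw [← Category.assoc, ← (T.q a).naturality h, Category.assoc, EB.ε_succ_q,
        Functor.comp_map, ← F.map_comp_assoc, ih, F.map_comp_assoc, ← hh,
        ← reassoc_of% (EA.ε_succ_q a)]
    · rw [EB.ι_comp_map_comp_ε, ← Category.assoc, EA.ι_comp_ε]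
      exact (Category.id_comp h).symm
  | limit n hn ih =>
    refine T.limit_hom_ext hn fun m hm => ?_
    rw [← Category.assoc, ← (T.w hm.le).naturality h, Category.assoc, EB.ε_limit n hn m hm,
      ih m hm, ← Category.assoc, EA.ε_limit n hn m hm]

lemma υ_comp_ε (hl : Order.IsSuccLimit l) [PreservesColimitsOfShape {m : Ordinal.{v} // m < l} F]
    {υ : T.Fo l ⋙ F ⟶ T.Fo l} (hυ : T.IsChainAlgStr l υ) {B : C} {β : F.obj B ⟶ B}
    (E : TermEval F T B β) : υ.app B ≫ E.ε l = F.map (E.ε l) ≫ β := by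
  refine T.map_limit_hom_ext hl fun m hm => ?_
  have hm1 : m + 1 < l := hl.add_one_lt hm
  rw [← Category.assoc, hυ m hm hm1.le, Category.assoc, E.ε_limit l hl (m + 1) hm1, E.ε_succ_q,
    ← F.map_comp_assoc, E.ε_limit l hl m hm]

lemma υ_comp_map_comp_ε (hl : Order.IsSuccLimit l)
    [PreservesColimitsOfShape {m : Ordinal.{v} // m < l} F]
    {υ : T.Fo l ⋙ F ⟶ T.Fo l} (hυ : T.IsChainAlgStr l υ) {A B : C} {β : F.obj B ⟶ B}
    (E : TermEval F T B β) (f : A ⟶ B) :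
    υ.app A ≫ (T.Fo l).map f ≫ E.ε l = F.map ((T.Fo l).map f ≫ E.ε l) ≫ β := by
  rw [← Category.assoc, ← υ.naturality f, Functor.comp_map, Category.assoc, E.υ_comp_ε hl hυ,
    F.map_comp_assoc]

lemma y_comp_ε (hl : Order.IsSuccLimit l) (h1 : (0 : Ordinal.{v}) + 1 ≤ l) {y : F ⟶ T.Fo l}
    (hy : ∀ A : C, y.app A = F.map ((T.ι 0).app A) ≫ (T.q 0).app A ≫ (T.w h1).app A)
    {B : C} {β : F.obj B ⟶ B} (E : TermEval F T B β) : y.app B ≫ E.ε l = β := by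
  rw [hy, Category.assoc, Category.assoc, E.ε_limit l hl (0 + 1) (hl.add_one_lt hl.pos),
    E.ε_succ_q, ← F.map_comp_assoc, E.ε_zero]
  simp

end TermEval

namespace CategoryTheory.Monad

variable {C : Type u} [Category.{v} C] {F : C ⥤ C} (M : Monad C) (ρ : F ⟶ (M : C ⥤ C))

def algStrOf (X : C) : F.obj (M.obj X) ⟶ M.obj X := ρ.app (M.obj X) ≫ M.μ.app X

lemma algStrOf_comp_map_comp_μ {X A : C} (s : X ⟶ M.obj A) :
    M.algStrOf ρ X ≫ M.map s ≫ M.μ.app A = F.map (M.map s ≫ M.μ.app A) ≫ M.algStrOf ρ A := by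
  simp only [algStrOf, Category.assoc, Functor.map_comp, ρ.naturality_assoc, M.assoc,
    M.mu_naturality_assoc]

lemma algStrOf_comp_map {A B : C} (f : A ⟶ B) :
    M.algStrOf ρ A ≫ M.map f = F.map (M.map f) ≫ M.algStrOf ρ B := by
  simp only [algStrOf, Category.assoc, ← M.mu_naturality, ρ.naturality_assoc]

lemma map_η_comp_algStrOf (A : C) : F.map (M.η.app A) ≫ M.algStrOf ρ A = ρ.app A := by
  rw [algStrOf, ρ.naturality_assoc, M.right_unit]
  exact Category.comp_id _

end CategoryTheory.Monad

namespace TermConstruction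

variable {C : Type u} [Category.{v} C] {F : C ⥤ C} (T : TermConstruction F) {l : Ordinal.{v}}
  (Ev : ∀ (A : C) (α : F.obj A ⟶ A), TermEval F T A α) {υ : T.Fo l ⋙ F ⟶ T.Fo l}

/-- `Z_F ε_l V_F` in the notation of the paper. -/
@[simps]
def mult (l : Ordinal.{v}) (υ : T.Fo l ⋙ F ⟶ T.Fo l) : T.Fo l ⋙ T.Fo l ⟶ T.Fo l where
  app A := (Ev ((T.Fo l).obj A) (υ.app A)).ε l
  naturality _ _ f := TermEval.map_comp_ε _ _ (υ.naturality f).symm l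

lemma map_ι_comp_mult (hl : Order.IsSuccLimit l)
    [PreservesColimitsOfShape {m : Ordinal.{v} // m < l} F] (hυ : T.IsChainAlgStr l υ) (A : C) :
    (T.Fo l).map ((T.ι l).app A) ≫ (T.mult Ev l υ).app A = 𝟙 ((T.Fo l).obj A) :=
  T.algHom_ext hl hυ (υ.app A)
    (by rw [mult_app, TermEval.ι_comp_map_comp_ε]; exact (Category.comp_id _).symm)
    (TermEval.υ_comp_map_comp_ε hl hυ _ _) (by simp)

lemma map_mult_comp_mult (hl : Order.IsSuccLimit l)
    [PreservesColimitsOfShape {m : Ordinal.{v} // m < l} F] (hυ : T.IsChainAlgStr l υ) (A : C) :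
    (T.Fo l).map ((T.mult Ev l υ).app A) ≫ (T.mult Ev l υ).app A =
      (T.mult Ev l υ).app ((T.Fo l).obj A) ≫ (T.mult Ev l υ).app A :=
  TermEval.map_comp_ε _ _ (TermEval.υ_comp_ε hl hυ _) l

@[simps]
def monadLift (l : Ordinal.{v}) (M : Monad C) (ρ : F ⟶ (M : C ⥤ C)) :
    T.Fo l ⟶ (M : C ⥤ C) where
  app A := (T.Fo l).map (M.η.app A) ≫ (Ev (M.obj A) (M.algStrOf ρ A)).ε l
  naturality A B f := by
    rw [← Functor.map_comp_assoc, M.unit_naturality, Functor.map_comp_assoc,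
      TermEval.map_comp_ε _ _ (M.algStrOf_comp_map ρ f), Category.assoc]

variable (M : Monad C) (ρ : F ⟶ (M : C ⥤ C))

lemma ι_comp_monadLift (A : C) : (T.ι l).app A ≫ (T.monadLift Ev l M ρ).app A = M.η.app A :=
  TermEval.ι_comp_map_comp_ε _ l _

lemma υ_comp_monadLift (hl : Order.IsSuccLimit l)
    [PreservesColimitsOfShape {m : Ordinal.{v} // m < l} F] (hυ : T.IsChainAlgStr l υ) (A : C) :
    υ.app A ≫ (T.monadLift Ev l M ρ).app A =
      F.map ((T.monadLift Ev l M ρ).app A) ≫ M.algStrOf ρ A :=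
  TermEval.υ_comp_map_comp_ε hl hυ _ _

lemma mult_comp_monadLift (hl : Order.IsSuccLimit l)
    [PreservesColimitsOfShape {m : Ordinal.{v} // m < l} F] (hυ : T.IsChainAlgStr l υ) (A : C) :
    (T.mult Ev l υ).app A ≫ (T.monadLift Ev l M ρ).app A =
      (T.monadLift Ev l M ρ).app ((T.Fo l).obj A) ≫ M.map ((T.monadLift Ev l M ρ).app A) ≫
        M.μ.app A := by
  set σ := T.monadLift Ev l M ρ
  have hσ : M.η.app _ ≫ M.map (σ.app A) ≫ M.μ.app A = σ.app A := by
    rw [← reassoc_of% (M.η.naturality (σ.app A)), M.left_unit]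
    exact Category.comp_id _
  calc (T.mult Ev l υ).app A ≫ σ.app A
      = (T.Fo l).map (σ.app A) ≫ (Ev (M.obj A) (M.algStrOf ρ A)).ε l :=
        (TermEval.map_comp_ε _ _ (T.υ_comp_monadLift Ev M ρ hl hυ A) l).symm
    _ = (T.Fo l).map (M.η.app _ ≫ M.map (σ.app A) ≫ M.μ.app A) ≫
          (Ev (M.obj A) (M.algStrOf ρ A)).ε l := by rw [hσ]
    _ = (T.Fo l).map (M.η.app _) ≫ (Ev _ (M.algStrOf ρ ((T.Fo l).obj A))).ε l ≫
          M.map (σ.app A) ≫ M.μ.app A := by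
        rw [Functor.map_comp_assoc,
          TermEval.map_comp_ε _ _ (M.algStrOf_comp_map_comp_μ ρ (σ.app A))]
    _ = σ.app ((T.Fo l).obj A) ≫ M.map (σ.app A) ≫ M.μ.app A := (Category.assoc _ _ _).symm

lemma y_comp_monadLift (hl : Order.IsSuccLimit l) (h1 : (0 : Ordinal.{v}) + 1 ≤ l)
    {y : F ⟶ T.Fo l}
    (hy : ∀ A : C, y.app A = F.map ((T.ι 0).app A) ≫ (T.q 0).app A ≫ (T.w h1).app A) :
    y ≫ T.monadLift Ev l M ρ = ρ := by
  ext A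
  rw [NatTrans.comp_app, monadLift_app, ← Category.assoc, ← y.naturality, Category.assoc,
    TermEval.y_comp_ε hl h1 hy, M.map_η_comp_algStrOf]

lemma eq_monadLift (hl : Order.IsSuccLimit l)
    [PreservesColimitsOfShape {m : Ordinal.{v} // m < l} F] (hυ : T.IsChainAlgStr l υ)
    (h1 : (0 : Ordinal.{v}) + 1 ≤ l) {y : F ⟶ T.Fo l}
    (hy : ∀ A : C, y.app A = F.map ((T.ι 0).app A) ≫ (T.q 0).app A ≫ (T.w h1).app A)
    {σ : T.Fo l ⟶ (M : C ⥤ C)} (hι : ∀ A : C, (T.ι l).app A ≫ σ.app A = M.η.app A)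
    (hμ : ∀ A : C, (T.mult Ev l υ).app A ≫ σ.app A =
      σ.app ((T.Fo l).obj A) ≫ M.map (σ.app A) ≫ M.μ.app A)
    (hyσ : y ≫ σ = ρ) : σ = T.monadLift Ev l M ρ := by
  ext A
  have hσ : υ.app A ≫ σ.app A = F.map (σ.app A) ≫ M.algStrOf ρ A := by
    rw [← TermEval.y_comp_ε hl h1 hy (Ev _ (υ.app A)), Category.assoc, ← mult_app T Ev, hμ,
      ← Category.assoc, ← NatTrans.comp_app, hyσ, ← ρ.naturality_assoc]
    rfl
  exact T.algHom_ext hl hυ (M.algStrOf ρ A) ((hι A).trans (T.ι_comp_monadLift Ev M ρ A).symm)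
    hσ (T.υ_comp_monadLift Ev M ρ hl hυ A)

end TermConstruction

theorem free_monad_general {C : Type u} [Category.{v} C] (F : C ⥤ C)
    (T : TermConstruction F) (l : Ordinal.{v}) (hl : Order.IsSuccLimit l)
    [PreservesColimitsOfShape {m : Ordinal.{v} // m < l} F]
    (Ev : ∀ (A : C) (α : F.obj A ⟶ A), TermEval F T A α)
    (υ : T.Fo l ⋙ F ⟶ T.Fo l)
    (hυ : ∀ (n : Ordinal.{v}) (hn : n < l) (hn1 : n + 1 ≤ l) (A : C),
      F.map ((T.w hn.le).app A) ≫ υ.app A = (T.q n).app A ≫ (T.w hn1).app A)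
    (y : F ⟶ T.Fo l) (h1 : (0 : Ordinal.{v}) + 1 ≤ l)
    (hy : ∀ A : C, y.app A = F.map ((T.ι 0).app A) ≫ (T.q 0).app A ≫ (T.w h1).app A) :
    ∃ μ : T.Fo l ⋙ T.Fo l ⟶ T.Fo l,
      (∀ A : C, μ.app A = (Ev ((T.Fo l).obj A) (υ.app A)).ε l) ∧
      -- monad laws for (F_λ, ι l, μ)
      (∀ A : C, (T.ι l).app ((T.Fo l).obj A) ≫ μ.app A = 𝟙 ((T.Fo l).obj A)) ∧
      (∀ A : C, (T.Fo l).map ((T.ι l).app A) ≫ μ.app A = 𝟙 ((T.Fo l).obj A)) ∧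
      (∀ A : C, (T.Fo l).map (μ.app A) ≫ μ.app A = μ.app ((T.Fo l).obj A) ≫ μ.app A) ∧
      -- freeness
      (∀ (M : Monad C) (ρ : F ⟶ (M : C ⥤ C)),
        ∃! σ : T.Fo l ⟶ (M : C ⥤ C),
          ((∀ A : C, (T.ι l).app A ≫ σ.app A = M.η.app A) ∧
           (∀ A : C, μ.app A ≫ σ.app A =
              σ.app ((T.Fo l).obj A) ≫ (M : C ⥤ C).map (σ.app A) ≫ M.μ.app A)) ∧
          y ≫ σ = ρ) := by
  refine ⟨T.mult Ev l υ, fun A => rfl, fun A => (Ev _ _).ι_comp_ε l,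
    T.map_ι_comp_mult Ev hl hυ, T.map_mult_comp_mult Ev hl hυ, fun M ρ => ?_⟩
  refine ⟨T.monadLift Ev l M ρ, ⟨⟨T.ι_comp_monadLift Ev M ρ, T.mult_comp_monadLift Ev M ρ hl hυ⟩,
    T.y_comp_monadLift Ev M ρ hl h1 hy⟩, ?_⟩
  rintro σ ⟨⟨hι, hμ⟩, hyσ⟩
  exact T.eq_monadLift Ev M ρ hl hυ h1 hy hι hμ hyσ

/-- Let `F` preserve colimits of `λ`-chains.  Then `F_λ` carries a monad structure
`M(F) = (F_λ, η, μ)` with unit `η = ι_λ` and multiplication `μ` given by term-evaluation on the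
free algebras (`μ_A = ε_{λ,(F_λ A, υ_A)}`, i.e. `μ = Z_F ε_λ V_F`), and together with
`y_λ = w_{1,λ} ∘ q₀ : F ⟶ F_λ` it is the free monad on `F`: for every monad `M` on `C` and
every natural transformation `ρ : F ⟶ M` there is a unique monad morphism
`σ : F_λ ⟶ M` with `σ ∘ y_λ = ρ`. -/
theorem free_monad {C : Type u} [Category.{v} C] [HasColimits C] (F : C ⥤ C)
    (T : TermConstruction F) (l : Ordinal.{v}) (hl : Order.IsSuccLimit l)
    [PreservesColimitsOfShape {m : Ordinal.{v} // m < l} F]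
    (Ev : ∀ (A : C) (α : F.obj A ⟶ A), TermEval F T A α)
    (υ : T.Fo l ⋙ F ⟶ T.Fo l)
    (hυ : ∀ (n : Ordinal.{v}) (hn : n < l) (hn1 : n + 1 ≤ l) (A : C),
      F.map ((T.w hn.le).app A) ≫ υ.app A = (T.q n).app A ≫ (T.w hn1).app A)
    (y : F ⟶ T.Fo l) (h1 : (0 : Ordinal.{v}) + 1 ≤ l)
    (hy : ∀ A : C, y.app A = F.map ((T.ι 0).app A) ≫ (T.q 0).app A ≫ (T.w h1).app A) :
    ∃ μ : T.Fo l ⋙ T.Fo l ⟶ T.Fo l,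
      (∀ A : C, μ.app A = (Ev ((T.Fo l).obj A) (υ.app A)).ε l) ∧
      -- monad laws for (F_λ, ι l, μ)
      (∀ A : C, (T.ι l).app ((T.Fo l).obj A) ≫ μ.app A = 𝟙 ((T.Fo l).obj A)) ∧
      (∀ A : C, (T.Fo l).map ((T.ι l).app A) ≫ μ.app A = 𝟙 ((T.Fo l).obj A)) ∧
      (∀ A : C, (T.Fo l).map (μ.app A) ≫ μ.app A = μ.app ((T.Fo l).obj A) ≫ μ.app A) ∧
      -- freeness
      (∀ (M : Monad C) (ρ : F ⟶ (M : C ⥤ C)),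
        ∃! σ : T.Fo l ⟶ (M : C ⥤ C),
          ((∀ A : C, (T.ι l).app A ≫ σ.app A = M.η.app A) ∧
           (∀ A : C, μ.app A ≫ σ.app A =
              σ.app ((T.Fo l).obj A) ≫ (M : C ⥤ C).map (σ.app A) ≫ M.μ.app A)) ∧
          y ≫ σ = ρ) :=
  free_monad_general F T l hl Ev υ hυ y h1 hy
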